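/- For p ∈ (0,1) and every convex body K ∈ 𝒦₀², the support of the L_p surface area measure S_{K,p} is not a pair of antipodal points {v, −v}. -/

import Mathlib

open MeasureTheory Set
open scoped RealInnerProductSpace ENNReal NNReal Classical

noncomputable section

abbrev E (n : ℕ) : Type := EuclideanSpace ℝ (Fin n)

/-- The support function of a set. -/
def suppFn {n : ℕ} (K : Set (E n)) (u : E n) : ℝ :=
  sSup ((fun x => ⟪x, u⟫) '' K)

/-- `u` is an exterior unit normal of `K` at `x`. -/
def IsOuterNormalAt {n : ℕ} (K : Set (E n)) (u x : E n) : Prop :=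
  ‖u‖ = 1 ∧ ∀ y ∈ K, ⟪y, u⟫ ≤ ⟪x, u⟫

/-- A choice of Gauss map (exterior unit normal) for `K`. -/
def gaussMap {n : ℕ} (K : Set (E n)) (x : E n) : E n :=
  if h : ∃ u, IsOuterNormalAt K u x then h.choose else 0

/-- The surface area measure of a compact convex set, extended to the degenerate case:
if `K` has nonempty interior it is `S_K(ω) = ℋ^{n-1}(ν_K^{-1}(ω))`; if `K` lies in a
hyperplane orthogonal to a unit vector `v` it is `ℋ^{n-1}(K)⋅(δ_v + δ_{-v})` (which is `0`
when `dim K ≤ n-2`). -/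
def surfMeasure {n : ℕ} (K : Set (E n)) : Measure (E n) :=
  if (interior K).Nonempty then
    Measure.map (gaussMap K) ((μH[(n : ℝ) - 1]).restrict (frontier K))
  else if h : ∃ v : E n, ‖v‖ = 1 ∧ ∀ x ∈ K, ∀ y ∈ K, ⟪x - y, v⟫ = 0 then
    (μH[(n : ℝ) - 1] K) • (Measure.dirac h.choose + Measure.dirac (-h.choose))
  else 0

/-- The `L_p` surface area measure `dS_{K,p} = h_K^{1-p} dS_K`. -/
def lpSurfMeasure {n : ℕ} (p : ℝ) (K : Set (E n)) : Measure (E n) :=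
  (surfMeasure K).withDensity (fun u => ENNReal.ofReal (suppFn K u ^ (1 - p)))

/-- A convex body: a compact convex set with nonempty interior. -/
def IsConvexBody {n : ℕ} (K : Set (E n)) : Prop :=
  Convex ℝ K ∧ IsCompact K ∧ (interior K).Nonempty

/-- The support of a Borel measure. -/
def msupport {n : ℕ} (μ : Measure (E n)) : Set (E n) :=
  {x | ∀ U : Set (E n), IsOpen U → x ∈ U → 0 < μ U}

/-- The unit sphere `S^{n-1}` in `ℝⁿ`. -/
def unitSphere (n : ℕ) : Set (E n) := Metric.sphere 0 1

/-- The spherical cap `Ω(v,t) = {u ∈ S^{n-1} : ⟨u,v⟩ > t}`. -/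
def hemi {n : ℕ} (v : E n) (t : ℝ) : Set (E n) :=
  {u | u ∈ unitSphere n ∧ t < ⟪u, v⟫}

/-!
Suppose the support of `S_{K,p}` is `{v, -v}`. The points `±v` are then atoms of `S_{K,p}`, and
since its density `h_K^{1-p}` vanishes where `h_K = 0`, both `h_K(v)` and `h_K(-v)` are positive.
The open set of directions `u ≠ ±v` with `h_K(u) > 0` carries no `S_K`-mass, so at
`ℋ¹`-almost every boundary point whose normal is not `±v` the supporting line passes through `o`.
Projecting onto `ℝv` (a Lipschitz map) we find levels `0 < a < h_K(v)` and
`-h_K(-v) < b < 0` at which every boundary point is of this kind. Let `y` be the right end of the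
chord of `K` at level `a` and `m'` the left end of the chord at level `b`. The supporting line
`oy` keeps the chord at level `b` to its left, and the line `om'` keeps `y` to its right; measured
with the area form these two conditions contradict each other.
-/

open Module
open scoped EuclideanSpace

section SupportFunction

variable {n : ℕ} {K : Set (E n)}

lemma le_suppFn (hK : IsCompact K) {x : E n} (hx : x ∈ K) (u : E n) : ⟪x, u⟫ ≤ suppFn K u :=
  le_csSup (hK.image (by fun_prop)).bddAbove (mem_image_of_mem _ hx)

lemma suppFn_nonneg (hK : IsCompact K) (h0 : (0 : E n) ∈ K) (u : E n) : 0 ≤ suppFn K u := by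
  simpa using le_suppFn hK h0 u

lemma continuous_suppFn (hK : IsCompact K) : Continuous (suppFn K) :=
  hK.continuous_sSup (f := fun u x => ⟪x, u⟫) (by fun_prop)

lemma exists_mem_suppFn_eq (hK : IsCompact K) (hne : K.Nonempty) (u : E n) :
    ∃ x ∈ K, suppFn K u = ⟪x, u⟫ :=
  hK.exists_sSup_image_eq hne (by fun_prop)

lemma IsOuterNormalAt.suppFn_eq {u x : E n} (h : IsOuterNormalAt K u x) (hK : IsCompact K)
    (hx : x ∈ K) : suppFn K u = ⟪x, u⟫ :=
  le_antisymm (csSup_le (Nonempty.image _ ⟨x, hx⟩) (by rintro _ ⟨y, hy, rfl⟩; exact h.2 y hy))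
    (le_suppFn hK hx u)

lemma exists_isOuterNormalAt (hconv : Convex ℝ K) (hKc : IsClosed K)
    (hint : (interior K).Nonempty) {x : E n} (hx : x ∈ frontier K) :
    ∃ u, IsOuterNormalAt K u x := by
  rw [hKc.frontier_eq] at hx
  obtain ⟨f, c, hf0, hfK, hfx⟩ := geometric_hahn_banach_of_nonempty_interior hconv
    (convex_singleton x) (disjoint_singleton_right.2 hx.2) hint (singleton_nonempty x)
  set u := (InnerProductSpace.toDual ℝ (E n)).symm f
  have hf : ∀ y, f y = ⟪y, u⟫ := fun y => by
    rw [real_inner_comm, InnerProductSpace.toDual_symm_apply]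
  have hu : u ≠ 0 := by simpa [u] using hf0
  refine ⟨‖u‖⁻¹ • u, by simp [norm_smul, hu], fun y hy => ?_⟩
  simp only [real_inner_smul_right, ← hf]
  gcongr
  exact (hfK y hy).trans (hfx x rfl)

lemma isOuterNormalAt_gaussMap {x : E n} (h : ∃ u, IsOuterNormalAt K u x) :
    IsOuterNormalAt K (gaussMap K x) x := by
  rw [gaussMap, dif_pos h]
  exact h.choose_spec

end SupportFunction

section Slices

open Filter Topology

variable {n : ℕ} {K : Set (E n)}

lemma exists_mem_interior_lt_inner (hK : IsConvexBody K) {v : E n} {t : ℝ}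
    (ht : t < suppFn K v) : ∃ a ∈ interior K, t < ⟪a, v⟫ := by
  obtain ⟨hconv, hcomp, hint⟩ := hK
  obtain ⟨x, hx, hxv⟩ := exists_mem_suppFn_eq hcomp (hint.mono interior_subset) v
  have hx' : x ∈ closure (interior K) := by
    rwa [hconv.closure_interior_eq_closure_of_nonempty_interior hint, hcomp.isClosed.closure_eq]
  obtain ⟨a, ha, hav⟩ := mem_closure_iff.1 hx' {y | t < ⟪y, v⟫}
    (isOpen_lt continuous_const (by fun_prop)) (by simpa [← hxv] using ht)
  exact ⟨a, hav, ha⟩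

lemma exists_mem_interior_inner_eq (hK : IsConvexBody K) {v : E n} {t : ℝ}
    (ht₁ : -suppFn K (-v) < t) (ht₂ : t < suppFn K v) : ∃ x ∈ interior K, ⟪x, v⟫ = t := by
  obtain ⟨a, ha, hav⟩ := exists_mem_interior_lt_inner hK ht₂
  obtain ⟨b, hb, hbv⟩ := exists_mem_interior_lt_inner hK (neg_lt.1 ht₁)
  rw [inner_neg_right, neg_lt_neg_iff] at hbv
  exact hK.1.interior.isPreconnected.intermediate_value hb ha (by fun_prop) ⟨hbv.le, hav.le⟩

lemma exists_mem_inner_eq_inner_lt_of_mem_interior {v w z : E n} (hwv : ⟪w, v⟫ = 0)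
    (hw : w ≠ 0) (hz : z ∈ interior K) : ∃ z' ∈ K, ⟪z', v⟫ = ⟪z, v⟫ ∧ ⟪z, w⟫ < ⟪z', w⟫ := by
  have hcont : Continuous (fun s : ℝ => z + s • w) := by fun_prop
  have hlim : Tendsto (fun s : ℝ => z + s • w) (𝓝[>] 0) (𝓝 z) := by
    simpa using (hcont.tendsto 0).mono_left nhdsWithin_le_nhds
  obtain ⟨s, hs, hs0⟩ :=
    ((hlim.eventually (isOpen_interior.mem_nhds hz)).and self_mem_nhdsWithin).exists
  refine ⟨z + s • w, interior_subset hs, by simp [inner_add_left, real_inner_smul_left, hwv], ?_⟩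
  have : 0 < s * ⟪w, w⟫ := mul_pos hs0 (real_inner_self_pos.2 hw)
  simpa [inner_add_left, real_inner_smul_left] using this

lemma exists_mem_frontier_inner_eq_inner_lt (hK : IsCompact K) {v w x : E n}
    (hwv : ⟪w, v⟫ = 0) (hw : w ≠ 0) (hx : x ∈ interior K) :
    ∃ y ∈ frontier K, ⟪y, v⟫ = ⟪x, v⟫ ∧ ⟪x, w⟫ < ⟪y, w⟫ := by
  set slice := K ∩ {y | ⟪y, v⟫ = ⟪x, v⟫}
  have hslice : IsCompact slice := hK.inter_right (isClosed_eq (by fun_prop) continuous_const)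
  obtain ⟨y, ⟨hyK, hyv⟩, hymax⟩ := hslice.exists_isMaxOn ⟨x, interior_subset hx, rfl⟩
    (f := fun y => ⟪y, w⟫) (by fun_prop)
  have hlt : ∀ z ∈ interior K, ⟪z, v⟫ = ⟪x, v⟫ → ⟪z, w⟫ < ⟪y, w⟫ := fun z hz hzv => by
    obtain ⟨z', hz'K, hz'v, hzz'⟩ := exists_mem_inner_eq_inner_lt_of_mem_interior hwv hw hz
    exact hzz'.trans_le (hymax ⟨hz'K, hz'v.trans hzv⟩)
  refine ⟨y, ?_, hyv, hlt x hx rfl⟩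
  rw [hK.isClosed.frontier_eq]
  exact ⟨hyK, fun hy => (hlt y hy hyv).false⟩

lemma exists_mem_frontier_pair_inner_eq (o : Orientation ℝ (E 2) (Fin 2)) {K : Set (E 2)}
    (hK : IsConvexBody K) {v : E 2} (hv : v ≠ 0) {t : ℝ} (ht₁ : -suppFn K (-v) < t)
    (ht₂ : t < suppFn K v) : ∃ y ∈ frontier K, ∃ y' ∈ frontier K,
      ⟪y, v⟫ = t ∧ ⟪y', v⟫ = t ∧ o.areaForm v y' < o.areaForm v y := by
  obtain ⟨x, hx, hxv⟩ := exists_mem_interior_inner_eq hK ht₁ ht₂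
  have hJv : ⟪o.rightAngleRotation v, v⟫ = 0 := o.inner_rightAngleRotation_self v
  have hJv0 : o.rightAngleRotation v ≠ 0 := by simpa using hv
  obtain ⟨y, hy, hyv, hxy⟩ := exists_mem_frontier_inner_eq_inner_lt hK.2.1 hJv hJv0 hx
  obtain ⟨y', hy', hy'v, hxy'⟩ :=
    exists_mem_frontier_inner_eq_inner_lt hK.2.1 (by rw [inner_neg_left, hJv, neg_zero])
      (neg_ne_zero.2 hJv0) hx
  simp only [inner_neg_right, neg_lt_neg_iff, real_inner_comm (o.rightAngleRotation v),
    o.inner_rightAngleRotation_left] at hxy hxy'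
  exact ⟨y, hy, y', hy', hyv.trans hxv, hy'v.trans hxv, hxy'.trans hxy⟩

end Slices

section Plane

variable {V : Type*} [NormedAddCommGroup V] [InnerProductSpace ℝ V] [Fact (finrank ℝ V = 2)]
  (o : Orientation ℝ V (Fin 2))

/-- Points of a half-plane bounded by a line through `0` and `y` lie on one side of that line. -/
lemma Orientation.areaForm_mul_areaForm_nonneg {u y z z' : V} (hu : u ≠ 0) (hyu : ⟪y, u⟫ = 0)
    (hz : ⟪z, u⟫ ≤ 0) (hz' : ⟪z', u⟫ ≤ 0) : 0 ≤ o.areaForm y z * o.areaForm y z' := by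
  rcases eq_or_ne y 0 with rfl | hy
  · simp
  have hyu' : 0 < o.areaForm y u ^ 2 := by
    have := o.inner_sq_add_areaForm_sq y u
    rw [hyu, zero_pow two_ne_zero, zero_add] at this
    rw [this]
    exact mul_pos (pow_pos (norm_pos_iff.2 hy) 2) (pow_pos (norm_pos_iff.2 hu) 2)
  have ez := o.inner_mul_inner_add_areaForm_mul_areaForm y u z
  have ez' := o.inner_mul_inner_add_areaForm_mul_areaForm y u z'
  rw [hyu, zero_mul, zero_add, real_inner_comm] at ez ez'
  refine nonneg_of_mul_nonneg_right (a := o.areaForm y u ^ 2) ?_ hyu'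
  calc 0 ≤ (‖y‖ ^ 2) ^ 2 * (⟪z, u⟫ * ⟪z', u⟫) :=
        mul_nonneg (by positivity) (mul_nonneg_of_nonpos_of_nonpos hz hz')
    _ = (o.areaForm y u * o.areaForm y z) * (o.areaForm y u * o.areaForm y z') := by
        rw [ez, ez']; ring
    _ = _ := by ring

lemma Orientation.false_of_supportingLines_through_zero {K : Set V} {v y y' m m' u u' : V}
    (hy : y ∈ K) (hy' : y' ∈ K) (hm : m ∈ K)
    (hy'v : ⟪y', v⟫ = ⟪y, v⟫) (hyv : 0 < ⟪y, v⟫) (hyy' : o.areaForm v y' < o.areaForm v y)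
    (hmv : ⟪m, v⟫ = ⟪m', v⟫) (hm'v : ⟪m', v⟫ < 0) (hmm' : o.areaForm v m' < o.areaForm v m)
    (hu : u ≠ 0) (hyu : ⟪y, u⟫ = 0) (hKu : ∀ z ∈ K, ⟪z, u⟫ ≤ 0)
    (hu' : u' ≠ 0) (hm'u' : ⟪m', u'⟫ = 0) (hKu' : ∀ z ∈ K, ⟪z, u'⟫ ≤ 0) : False := by
  have hv : 0 < ‖v‖ ^ 2 := by
    rcases eq_or_ne v 0 with rfl | hv
    · simp at hyv
    · positivity
  have h₁ := o.areaForm_mul_areaForm_nonneg hu hyu (hKu y' hy') (hKu m hm)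
  have h₂ := o.areaForm_mul_areaForm_nonneg hu' hm'u' (hKu' m hm) (hKu' y hy)
  have e₁ := o.inner_mul_areaForm_sub v y y'
  have e₂ := o.inner_mul_areaForm_sub v y m
  have e₃ := o.inner_mul_areaForm_sub v m' m
  have e₄ := o.inner_mul_areaForm_sub v m' y
  simp only [real_inner_comm _ v, hy'v, hmv] at e₁ e₂ e₃ e₄
  have hyy'' : o.areaForm y y' < 0 := by
    refine neg_of_mul_neg_right (a := ‖v‖ ^ 2) ?_ hv.le
    rw [← e₁]
    nlinarith
  have hm'm : o.areaForm m' m < 0 := by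
    refine neg_of_mul_neg_right (a := ‖v‖ ^ 2) ?_ hv.le
    rw [← e₃]
    nlinarith
  have hym : o.areaForm y m ≤ 0 := nonpos_of_mul_nonneg_right h₁ hyy''
  have hm'y : o.areaForm m' y ≤ 0 := nonpos_of_mul_nonneg_right h₂ hm'm
  -- `e₂ + e₄` reads `⟪y, v⟫ * (ω v m - ω v m') = ‖v‖² * (ω y m + ω m' y)`, positive on the left.
  nlinarith [mul_nonpos_of_nonneg_of_nonpos hv.le hym, mul_nonpos_of_nonneg_of_nonpos hv.le hm'y,
    mul_pos hyv (sub_pos.2 hmm')]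

end Plane

section Measures

variable {n : ℕ}

lemma measure_compl_msupport (μ : Measure (E n)) : μ (msupport μ)ᶜ = 0 := by
  refine measure_null_of_locally_null _ fun x hx => ?_
  simp only [msupport, mem_compl_iff, mem_ofPred_eq, not_forall, not_lt, nonpos_iff_eq_zero] at hx
  obtain ⟨U, hU, hxU, hμU⟩ := hx
  exact ⟨U, mem_nhdsWithin_of_mem_nhds (hU.mem_nhds hxU), hμU⟩

lemma measure_singleton_pos_of_mem_msupport {μ : Measure (E n)} {x : E n}
    (hfin : (msupport μ).Finite) (hx : x ∈ msupport μ) : 0 < μ {x} := by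
  have hsub : (msupport μ \ {x})ᶜ ⊆ {x} ∪ (msupport μ)ᶜ := fun y hy => by
    by_cases hyx : y = x <;> simp_all
  calc 0 < μ (msupport μ \ {x})ᶜ := hx _ (hfin.sdiff.isClosed.isOpen_compl) (by simp)
    _ ≤ μ ({x} ∪ (msupport μ)ᶜ) := measure_mono hsub
    _ ≤ μ {x} + μ (msupport μ)ᶜ := measure_union_le _ _
    _ = μ {x} := by rw [measure_compl_msupport, add_zero]

variable {p : ℝ} {K : Set (E n)}

lemma suppFn_pos_of_lpSurfMeasure_singleton_pos (hp : p < 1) (hK : IsCompact K)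
    (h0 : (0 : E n) ∈ K) {u : E n} (h : 0 < lpSurfMeasure p K {u}) : 0 < suppFn K u := by
  rw [lpSurfMeasure, withDensity_apply _ (measurableSet_singleton u), Measure.restrict_singleton,
    lintegral_smul_measure, lintegral_dirac] at h
  refine (suppFn_nonneg hK h0 u).lt_of_ne fun hu => ?_
  rw [← hu, Real.zero_rpow (by linarith), ENNReal.ofReal_zero, smul_zero] at h
  exact h.false

lemma surfMeasure_eq_zero_of_lpSurfMeasure_eq_zero (hK : IsCompact K) {S : Set (E n)}
    (hS : S ⊆ {u | 0 < suppFn K u}) (h : lpSurfMeasure p K S = 0) : surfMeasure K S = 0 := by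
  rw [lpSurfMeasure, withDensity_apply_eq_zero
    ((continuous_suppFn hK).measurable.pow_const _).ennreal_ofReal] at h
  have hfS : {u | ENNReal.ofReal (suppFn K u ^ (1 - p)) ≠ 0} ∩ S = S :=
    inter_eq_right.2 fun u hu => by
      simpa using Real.rpow_pos_of_pos (hS hu) (1 - p)
  rwa [hfS] at h

lemma hausdorffMeasure_frontier_inter_gaussMap_preimage_eq_zero (hint : (interior K).Nonempty)
    (hne : surfMeasure K ≠ 0) {S : Set (E n)} (hS : MeasurableSet S)
    (h : surfMeasure K S = 0) : μH[(n : ℝ) - 1] (frontier K ∩ gaussMap K ⁻¹' S) = 0 := by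
  rw [surfMeasure, if_pos hint] at hne h
  have hg : AEMeasurable (gaussMap K) ((μH[(n : ℝ) - 1]).restrict (frontier K)) :=
    by_contra fun hg => hne (Measure.map_of_not_aemeasurable hg)
  rwa [Measure.map_apply_of_aemeasurable hg hS,
    Measure.restrict_apply' isClosed_frontier.measurableSet, inter_comm] at h

lemma hausdorffMeasure_frontier_inter_gaussMap_preimage_sdiff_eq_zero (hK : IsConvexBody K)
    (hne : lpSurfMeasure p K ≠ 0) {T : Set (E n)} (hT : IsClosed T)
    (hsupp : msupport (lpSurfMeasure p K) ⊆ T) :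
    μH[(n : ℝ) - 1] (frontier K ∩ gaussMap K ⁻¹' ({u | 0 < suppFn K u} \ T)) = 0 := by
  have hS : MeasurableSet ({u | 0 < suppFn K u} \ T) :=
    (measurableSet_lt measurable_const (continuous_suppFn hK.2.1).measurable).diff
      hT.measurableSet
  have hμS : lpSurfMeasure p K ({u | 0 < suppFn K u} \ T) = 0 :=
    measure_mono_null (fun u hu => fun hu' => hu.2 (hsupp hu')) (measure_compl_msupport _)
  refine hausdorffMeasure_frontier_inter_gaussMap_preimage_eq_zero hK.2.2 (fun h => hne ?_) hS
    (surfMeasure_eq_zero_of_lpSurfMeasure_eq_zero hK.2.1 sdiff_subset hμS)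
  rw [lpSurfMeasure, h, withDensity_zero_left]

lemma exists_mem_Ioo_forall_inner_ne {B : Set (E n)} (hB : μH[1] B = 0) (v : E n) {a b : ℝ}
    (hab : a < b) : ∃ t ∈ Ioo a b, ∀ x ∈ B, ⟪x, v⟫ ≠ t := by
  have hnull : volume ((fun x => ⟪x, v⟫) '' B) = 0 := by
    rw [← hausdorffMeasure_real]
    have hlip : LipschitzWith ‖innerSLFlip ℝ v‖₊ (fun x : E n => ⟪x, v⟫) :=
      (innerSLFlip ℝ v).lipschitz
    simpa [hB] using hlip.hausdorffMeasure_image_le zero_le_one B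
  obtain ⟨t, ht, htB⟩ : (Ioo a b \ (fun x => ⟪x, v⟫) '' B).Nonempty := by
    refine nonempty_of_measure_ne_zero (μ := volume) ?_
    simpa [measure_sdiff_null hnull] using hab
  exact ⟨t, ht, fun x hx hxt => htB ⟨x, hx, hxt⟩⟩

end Measures

lemma exists_supportingLine_through_zero {n : ℕ} {K : Set (E n)} (hK : IsConvexBody K)
    (h0 : (0 : E n) ∈ K) {v x : E n} (hx : x ∈ frontier K) (hxv₁ : ⟪x, v⟫ < suppFn K v)
    (hxv₂ : -suppFn K (-v) < ⟪x, v⟫) (hg : gaussMap K x ∉ {u | 0 < suppFn K u} \ {v, -v}) :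
    ∃ u ≠ 0, ⟪x, u⟫ = 0 ∧ ∀ z ∈ K, ⟪z, u⟫ ≤ 0 := by
  have hu := isOuterNormalAt_gaussMap (exists_isOuterNormalAt hK.1 hK.2.1.isClosed hK.2.2 hx)
  have hsupp := hu.suppFn_eq hK.2.1 (hK.2.1.isClosed.frontier_subset hx)
  have hxu : ⟪x, gaussMap K x⟫ = 0 := by
    refine hsupp ▸ (suppFn_nonneg hK.2.1 h0 _).antisymm' (not_lt.1 fun hpos => ?_)
    rcases not_not.1 (fun h => hg ⟨hpos, h⟩) with hgv | hgv
    · exact hxv₁.ne (hgv ▸ hsupp).symm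
    · rw [hgv, inner_neg_right] at hsupp
      linarith
  exact ⟨_, norm_ne_zero_iff.1 (hu.1 ▸ one_ne_zero), hxu, fun z hz => hxu ▸ hu.2 z hz⟩

/-- Lemma 4.1 of the paper. -/
theorem stmt_17 (p : ℝ) (hp : p ∈ Set.Ioo (0:ℝ) 1)
    (K : Set (E 2)) (hK : IsConvexBody K) (h0 : (0:E 2) ∈ K) :
    ¬ ∃ v : E 2, ‖v‖ = 1 ∧ msupport (lpSurfMeasure p K) = {v, -v} := by
  rintro ⟨v, hv, hsupp⟩
  have hfin : (msupport (lpSurfMeasure p K)).Finite := hsupp ▸ toFinite _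
  have hμv := measure_singleton_pos_of_mem_msupport (x := v) hfin (by simp [hsupp])
  have hμv' := measure_singleton_pos_of_mem_msupport (x := -v) hfin (by simp [hsupp])
  have hvK := suppFn_pos_of_lpSurfMeasure_singleton_pos hp.2 hK.2.1 h0 hμv
  have hvK' := suppFn_pos_of_lpSurfMeasure_singleton_pos hp.2 hK.2.1 h0 hμv'
  have hB := hausdorffMeasure_frontier_inter_gaussMap_preimage_sdiff_eq_zero hK
    (fun h => by simp [h] at hμv) (toFinite {v, -v}).isClosed hsupp.le
  rw [show ((2 : ℕ) : ℝ) - 1 = 1 by norm_num] at hB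
  obtain ⟨a, ⟨ha0, hav⟩, haB⟩ := exists_mem_Ioo_forall_inner_ne hB v hvK
  obtain ⟨b, ⟨hbv, hb0⟩, hbB⟩ := exists_mem_Ioo_forall_inner_ne hB v (neg_neg_of_pos hvK')
  let o : Orientation ℝ (E 2) (Fin 2) := (EuclideanSpace.basisFun (Fin 2) ℝ).toBasis.orientation
  have hv0 : v ≠ 0 := norm_ne_zero_iff.1 (hv ▸ one_ne_zero)
  obtain ⟨y, hy, y', hy', hyv, hy'v, hyy'⟩ :=
    exists_mem_frontier_pair_inner_eq o hK hv0 (by linarith) hav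
  obtain ⟨m, hm, m', hm', hmv, hm'v, hmm'⟩ :=
    exists_mem_frontier_pair_inner_eq o hK hv0 hbv (by linarith)
  obtain ⟨u, hu, hyu, hKu⟩ := exists_supportingLine_through_zero hK h0 hy (hyv ▸ hav)
    (hyv ▸ by linarith) fun h => haB y ⟨hy, h⟩ hyv
  obtain ⟨u', hu', hm'u', hKu'⟩ := exists_supportingLine_through_zero hK h0 hm'
    (hm'v ▸ by linarith) (hm'v ▸ hbv) fun h => hbB m' ⟨hm', h⟩ hm'v
  have hfK := hK.2.1.isClosed.frontier_subset
  exact o.false_of_supportingLines_through_zero (hfK hy) (hfK hy') (hfK hm)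
    (hy'v.trans hyv.symm) (hyv ▸ ha0) hyy' (hmv.trans hm'v.symm) (hm'v ▸ hb0) hmm'
    hu hyu hKu hu' hm'u' hKu'
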